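/- arXiv:2602.10914 — 4 statements merged into one kernel-verified Lean document; each statement's English description precedes it below -/
import Mathlib

section
/- Let Ω ⊆ ℝ² be open and u : Ω → ℝ^l a smooth map. Then for each β ∈ {1,2} and every x ∈ Ω, the divergence of Jiang's biharmonic stress-energy tensor satisfies ∑_{α=1}^{2} ∂_α(S²_{αβ}(u))(x) = −⟨∂_β u(x), Δ²u(x)⟩, where Δ²u = Δ(Δu). -/
open scoped RealInnerProductSpace
open Filter MeasureTheory Metric

noncomputable section

/-- The plane `ℝ²` as a Euclidean space. -/
abbrev E2 : Type := EuclideanSpace ℝ (Fin 2)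

/-- Euclidean space `ℝ^l`. -/
abbrev Eu (l : ℕ) : Type := EuclideanSpace ℝ (Fin l)

/-- Partial derivative `∂_α u` of a map `u : ℝ² → ℝ^l`. -/
def pd {l : ℕ} (α : Fin 2) (u : E2 → Eu l) (x : E2) : Eu l :=
  fderiv ℝ u x (EuclideanSpace.single α 1)

/-- Partial derivative `∂_α f` of a scalar function `f : ℝ² → ℝ`. -/
def pds (α : Fin 2) (f : E2 → ℝ) (x : E2) : ℝ :=
  fderiv ℝ f x (EuclideanSpace.single α 1)

/-- The componentwise Laplacian `Δu = ∂₁∂₁u + ∂₂∂₂u`. -/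
def lap {l : ℕ} (u : E2 → Eu l) (x : E2) : Eu l :=
  pd 0 (pd 0 u) x + pd 1 (pd 1 u) x

/-- `|∇u|² = |∂₁u|² + |∂₂u|²`. -/
def gradSq {l : ℕ} (u : E2 → Eu l) (x : E2) : ℝ :=
  ‖pd 0 u x‖ ^ 2 + ‖pd 1 u x‖ ^ 2

/-- The harmonic stress-energy tensor `S¹_{αβ}(u) = ½|∇u|²δ_{αβ} − ⟨∂_α u, ∂_β u⟩`. -/
def S1 {l : ℕ} (u : E2 → Eu l) (α β : Fin 2) (x : E2) : ℝ :=
  (1 / 2) * gradSq u x * (if α = β then 1 else 0) - ⟪pd α u x, pd β u x⟫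

/-- Jiang's biharmonic stress-energy tensor
`S²_{αβ}(u) = ½|Δu|²δ_{αβ} + ∑_γ ⟨∂_γ u, ∂_γ Δu⟩ δ_{αβ} − ⟨∂_α u, ∂_β Δu⟩ − ⟨∂_β u, ∂_α Δu⟩`. -/
def S2 {l : ℕ} (u : E2 → Eu l) (α β : Fin 2) (x : E2) : ℝ :=
  (1 / 2) * ‖lap u x‖ ^ 2 * (if α = β then 1 else 0)
    + (∑ γ : Fin 2, ⟪pd γ u x, pd γ (lap u) x⟫) * (if α = β then 1 else 0)
    - ⟪pd α u x, pd β (lap u) x⟫ - ⟪pd β u x, pd α (lap u) x⟫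

lemma contDiffAt_pd {l : ℕ} (α : Fin 2) {u : E2 → Eu l} {x : E2}
    (h : ContDiffAt ℝ (⊤ : ℕ∞) u x) : ContDiffAt ℝ (⊤ : ℕ∞) (pd α u) x :=
  (h.fderiv_right (by simp)).clm_apply contDiffAt_const

lemma contDiffAt_lap {l : ℕ} {u : E2 → Eu l} {x : E2}
    (h : ContDiffAt ℝ (⊤ : ℕ∞) u x) : ContDiffAt ℝ (⊤ : ℕ∞) (lap u) x :=
  (contDiffAt_pd 0 (contDiffAt_pd 0 h)).add (contDiffAt_pd 1 (contDiffAt_pd 1 h))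

lemma pd_comm {l : ℕ} {u : E2 → Eu l} {x : E2} (h : ContDiffAt ℝ (⊤ : ℕ∞) u x) (α γ : Fin 2) :
    pd α (pd γ u) x = pd γ (pd α u) x := by
  have hd : DifferentiableAt ℝ (fderiv ℝ u) x :=
    (h.fderiv_right (m := 1) (WithTop.coe_le_coe.mpr le_top)).differentiableAt one_ne_zero
  have hsymm := h.isSymmSndFDerivAt (by rw [minSmoothness_of_isRCLikeNormedField]; exact WithTop.coe_le_coe.mpr le_top)
  have key : ∀ a b : Fin 2, pd a (pd b u) x
      = fderiv ℝ (fderiv ℝ u) x (EuclideanSpace.single a 1) (EuclideanSpace.single b 1) := by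
    intro a b
    show fderiv ℝ (fun y => fderiv ℝ u y (EuclideanSpace.single b 1)) x _ = _
    rw [fderiv_clm_apply hd (differentiableAt_const _)]
    simp
  rw [key, key, hsymm]

lemma pds_add {f g : E2 → ℝ} {x : E2} (hf : DifferentiableAt ℝ f x)
    (hg : DifferentiableAt ℝ g x) (α : Fin 2) :
    pds α (fun y => f y + g y) x = pds α f x + pds α g x := by
  unfold pds; rw [fderiv_fun_add hf hg]; rfl

lemma pds_sub {f g : E2 → ℝ} {x : E2} (hf : DifferentiableAt ℝ f x)
    (hg : DifferentiableAt ℝ g x) (α : Fin 2) :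
    pds α (fun y => f y - g y) x = pds α f x - pds α g x := by
  unfold pds; rw [fderiv_fun_sub hf hg]; rfl

lemma pds_mul_const {f : E2 → ℝ} {x : E2} (hf : DifferentiableAt ℝ f x) (c : ℝ) (α : Fin 2) :
    pds α (fun y => f y * c) x = pds α f x * c := by
  have h : (fun y => f y * c) = fun y => c * f y := by funext y; ring
  unfold pds; rw [h, fderiv_const_mul hf]; simp [mul_comm]

lemma pds_inner {l : ℕ} {f g : E2 → Eu l} {x : E2} (hf : DifferentiableAt ℝ f x)
    (hg : DifferentiableAt ℝ g x) (α : Fin 2) :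
    pds α (fun y => ⟪f y, g y⟫) x = ⟪f x, pd α g x⟫ + ⟪pd α f x, g x⟫ :=
  fderiv_inner_apply ℝ hf hg _

lemma pds_S2 {l : ℕ} {u : E2 → Eu l} {x : E2} (h : ContDiffAt ℝ (⊤ : ℕ∞) u x) (α β γ : Fin 2) :
    pds γ (S2 u α β) x =
      (⟪lap u x, pd γ (lap u) x⟫
        + ((⟪pd 0 u x, pd γ (pd 0 (lap u)) x⟫ + ⟪pd γ (pd 0 u) x, pd 0 (lap u) x⟫)
          + (⟪pd 1 u x, pd γ (pd 1 (lap u)) x⟫ + ⟪pd γ (pd 1 u) x, pd 1 (lap u) x⟫)))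
        * (if α = β then 1 else 0)
      - (⟪pd α u x, pd γ (pd β (lap u)) x⟫ + ⟪pd γ (pd α u) x, pd β (lap u) x⟫)
      - (⟪pd β u x, pd γ (pd α (lap u)) x⟫ + ⟪pd γ (pd β u) x, pd α (lap u) x⟫) := by
  have hL : ContDiffAt ℝ (⊤ : ℕ∞) (lap u) x := contDiffAt_lap h
  have dU : ∀ c : Fin 2, DifferentiableAt ℝ (pd c u) x := fun c =>
    (contDiffAt_pd c h).differentiableAt (by simp)
  have dL : DifferentiableAt ℝ (lap u) x := hL.differentiableAt (by simp)
  have dPL : ∀ c : Fin 2, DifferentiableAt ℝ (pd c (lap u)) x := fun c =>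
    (contDiffAt_pd c hL).differentiableAt (by simp)
  have hfun : S2 u α β = fun y =>
      (⟪lap u y, lap u y⟫ * (1 / 2) * (if α = β then 1 else 0)
        + (⟪pd 0 u y, pd 0 (lap u) y⟫ + ⟪pd 1 u y, pd 1 (lap u) y⟫)
            * (if α = β then 1 else 0))
      - ⟪pd α u y, pd β (lap u) y⟫ - ⟪pd β u y, pd α (lap u) y⟫ := by
    funext y
    simp only [S2, Fin.sum_univ_two, ← real_inner_self_eq_norm_sq]
    ring
  have d00 : DifferentiableAt ℝ (fun y => ⟪lap u y, lap u y⟫) x := dL.inner ℝ dL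
  have dB0 : DifferentiableAt ℝ (fun y => ⟪pd 0 u y, pd 0 (lap u) y⟫) x :=
    (dU 0).inner ℝ (dPL 0)
  have dB1 : DifferentiableAt ℝ (fun y => ⟪pd 1 u y, pd 1 (lap u) y⟫) x :=
    (dU 1).inner ℝ (dPL 1)
  have dC : DifferentiableAt ℝ (fun y => ⟪pd α u y, pd β (lap u) y⟫) x :=
    (dU α).inner ℝ (dPL β)
  have dD : DifferentiableAt ℝ (fun y => ⟪pd β u y, pd α (lap u) y⟫) x :=
    (dU β).inner ℝ (dPL α)
  have dA : DifferentiableAt ℝ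
      (fun y => ⟪lap u y, lap u y⟫ * (1 / 2) * (if α = β then 1 else 0)) x :=
    (d00.mul_const _).mul_const _
  have dB : DifferentiableAt ℝ
      (fun y => (⟪pd 0 u y, pd 0 (lap u) y⟫ + ⟪pd 1 u y, pd 1 (lap u) y⟫)
          * (if α = β then 1 else 0)) x :=
    (dB0.add dB1).mul_const _
  rw [hfun]
  simp only [pds_sub ((dA.fun_add dB).fun_sub dC) dD γ, pds_sub (dA.fun_add dB) dC γ, pds_add dA dB γ,
    pds_mul_const (d00.mul_const (1 / 2 : ℝ)) _ γ, pds_mul_const d00 (1 / 2 : ℝ) γ,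
    pds_mul_const (dB0.fun_add dB1) _ γ, pds_add dB0 dB1 γ,
    pds_inner dL dL γ, pds_inner (dU 0) (dPL 0) γ, pds_inner (dU 1) (dPL 1) γ,
    pds_inner (dU α) (dPL β) γ, pds_inner (dU β) (dPL α) γ]
  rw [real_inner_comm (pd γ (lap u) x) (lap u x)]
  ring

/-- for a smooth map `u : Ω → ℝ^l` on an open set `Ω ⊆ ℝ²`, the divergence
of Jiang's biharmonic stress-energy tensor satisfies
`∑_α ∂_α (S²_{αβ}(u)) = −⟨∂_β u, Δ²u⟩` on `Ω`, where `Δ²u = Δ(Δu)`. -/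
theorem divergence_biharmonic_stress_energy {l : ℕ} (Ω : Set E2) (hΩ : IsOpen Ω)
    (u : E2 → Eu l) (hu : ContDiffOn ℝ (⊤ : ℕ∞) u Ω) (β : Fin 2) (x : E2) (hx : x ∈ Ω) :
    ∑ α : Fin 2, pds α (S2 u α β) x = -⟪pd β u x, lap (lap u) x⟫ := by
  have hu0 : ContDiffAt ℝ (⊤ : ℕ∞) u x := hu.contDiffAt (hΩ.mem_nhds hx)
  have hL : ContDiffAt ℝ (⊤ : ℕ∞) (lap u) x := contDiffAt_lap hu0
  have hc1 : pd 0 (pd 1 u) x = pd 1 (pd 0 u) x := pd_comm hu0 0 1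
  have hc2 : pd 0 (pd 1 (lap u)) x = pd 1 (pd 0 (lap u)) x := pd_comm hL 0 1
  have hlap : lap u x = pd 0 (pd 0 u) x + pd 1 (pd 1 u) x := rfl
  have hlap2 : lap (lap u) x = pd 0 (pd 0 (lap u)) x + pd 1 (pd 1 (lap u)) x := rfl
  rw [Fin.sum_univ_two, pds_S2 hu0 0 β 0, pds_S2 hu0 1 β 1]
  fin_cases β <;>
    simp only [Fin.zero_eta, Fin.mk_one, Fin.isValue, if_pos rfl, reduceIte, one_ne_zero, zero_ne_one,
      hc1, hc2, hlap, hlap2, inner_add_left, inner_add_right] <;>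
    ring

end
end

section
/- Let 0 < p < q and let u : Ω → ℝ^l be a smooth map on an open neighbourhood Ω of the closed annulus {p ≤ |x| ≤ q} in ℝ². Define v(x) = u*(|x|), the radial map given by the angular mean of u. Then ∫_{A(p,q)} ∑_{α=1}^{2} ⟨∂_α u, ∂_α v⟩ dx ≤ ∫_{A(p,q)} |∂_r u|² dx. -/
open scoped RealInnerProductSpace
open Filter MeasureTheory Metric

noncomputable section

/-- A sphere-valued map `u : Ω → S^{l-1} ⊂ ℝ^l` is `ε`-harmonic if `Δu − εΔ²u` is a real
scalar multiple of `u` at every point of `Ω` (the Euler–Lagrange equation of the ε-energy). -/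
def IsEpsHarmonic {l : ℕ} (ε : ℝ) (Ω : Set E2) (u : E2 → Eu l) : Prop :=
  ∀ x ∈ Ω, ∃ c : ℝ, lap u x - ε • lap (lap u) x = c • u x

/-- The point `(a, b) ∈ ℝ²`. -/
def pt (a b : ℝ) : E2 := (WithLp.equiv 2 (Fin 2 → ℝ)).symm ![a, b]

/-- The radial derivative `∂_r u(x) = Du(x)[x/|x|]`. -/
def radialDeriv {l : ℕ} (u : E2 → Eu l) (x : E2) : Eu l :=
  fderiv ℝ u x (‖x‖⁻¹ • x)

/-- The angular derivative `∂_θ u(x) = Du(x)[(-x₂, x₁)]`, so that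
`|∇u|² = |∂_r u|² + |x|⁻²|∂_θ u|²`. -/
def angularDeriv {l : ℕ} (u : E2 → Eu l) (x : E2) : Eu l :=
  fderiv ℝ u x (pt (-(x 1)) (x 0))

/-- The circle integral `∫_{∂B_t} f dS = ∫₀^{2π} f(t cos θ, t sin θ) t dθ`. -/
def circInt (t : ℝ) (f : E2 → ℝ) : ℝ :=
  ∫ θ in (0:ℝ)..(2 * Real.pi), f (pt (t * Real.cos θ) (t * Real.sin θ)) * t

/-- The open annulus `A(p,q) = {x ∈ ℝ² : p < |x| < q}`. -/
def ann (p q : ℝ) : Set E2 := {x : E2 | p < ‖x‖ ∧ ‖x‖ < q}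

/-- The angular mean `u*(r) = (1/2π) ∫₀^{2π} u(r cos θ, r sin θ) dθ`. -/
def amean {l : ℕ} (u : E2 → Eu l) (r : ℝ) : Eu l :=
  (2 * Real.pi)⁻¹ • ∫ θ in (0:ℝ)..(2 * Real.pi), u (pt (r * Real.cos θ) (r * Real.sin θ))


/-! ### Auxiliary lemmas -/

open scoped Topology

section aux

lemma pt_apply' (a b : ℝ) (i : Fin 2) : pt a b i = ![a, b] i := rfl

lemma norm_pt (a b : ℝ) : ‖pt a b‖ = Real.sqrt (a ^ 2 + b ^ 2) := by
  rw [EuclideanSpace.norm_eq]; simp [Fin.sum_univ_two, sq_abs]; rfl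

lemma norm_pt_circle {r : ℝ} (hr : 0 ≤ r) (θ : ℝ) :
    ‖pt (r * Real.cos θ) (r * Real.sin θ)‖ = r := by
  rw [norm_pt]
  have h : (r * Real.cos θ) ^ 2 + (r * Real.sin θ) ^ 2 = r ^ 2 := by
    have := Real.sin_sq_add_cos_sq θ; nlinarith
  rw [h, Real.sqrt_sq hr]

lemma norm_pt_cs (θ : ℝ) : ‖pt (Real.cos θ) (Real.sin θ)‖ = 1 := by
  have := norm_pt_circle (r := 1) zero_le_one θ
  simpa using this

lemma smul_pt (c a b : ℝ) : c • pt a b = pt (c * a) (c * b) := by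
  ext i; fin_cases i <;> simp [pt_apply']

lemma continuous_pt : Continuous (fun w : ℝ × ℝ => pt w.1 w.2) := by
  have h1 : Continuous (fun w : ℝ × ℝ => (![w.1, w.2] : Fin 2 → ℝ)) := by
    apply continuous_pi
    intro i
    fin_cases i <;> simp [continuous_fst, continuous_snd]
  exact (PiLp.continuous_toLp 2 (fun _ : Fin 2 => ℝ)).comp h1

lemma hasDerivAt_pt (c s : ℝ) (r : ℝ) :
    HasDerivAt (fun t : ℝ => pt (t * c) (t * s)) (pt c s) r := by
  have h : (fun t : ℝ => pt (t * c) (t * s)) = fun t : ℝ => t • pt c s := by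
    funext t; rw [smul_pt]
  rw [h]
  simpa using (hasDerivAt_id r).smul_const (pt c s)

lemma pt_decomp (x : E2) : ∑ α : Fin 2, x α • EuclideanSpace.single α 1 = x := by
  ext i
  simp only [PiLp.smul_apply, EuclideanSpace.single_apply, Finset.sum_apply]
  fin_cases i <;> simp [Fin.sum_univ_two]

lemma hasFDerivAt_norm' {x : E2} (hx : x ≠ 0) :
    HasFDerivAt (fun y : E2 => ‖y‖) (‖x‖⁻¹ • innerSL ℝ x) x := by
  have hsq : HasFDerivAt (fun y : E2 => ‖y‖ ^ 2) (2 • innerSL ℝ x) x :=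
    (hasStrictFDerivAt_norm_sq x).hasFDerivAt
  have hpos : (0:ℝ) < ‖x‖ ^ 2 := pow_pos (norm_pos_iff.mpr hx) 2
  have hsqrt : HasDerivAt Real.sqrt (1 / (2 * Real.sqrt (‖x‖ ^ 2))) (‖x‖ ^ 2) :=
    Real.hasDerivAt_sqrt (ne_of_gt hpos)
  have hcomp := hsqrt.comp_hasFDerivAt x hsq
  have heq : (fun y : E2 => Real.sqrt (‖y‖ ^ 2)) = fun y : E2 => ‖y‖ := by
    funext y; rw [Real.sqrt_sq (norm_nonneg y)]
  rw [Function.comp_def, heq] at hcomp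
  refine hcomp.congr_fderiv ?_
  ext y
  have hnx : ‖x‖ ≠ 0 := norm_ne_zero_iff.mpr hx
  rw [Real.sqrt_sq (norm_nonneg x)]
  simp only [ContinuousLinearMap.smul_apply, ContinuousLinearMap.coe_smul', Pi.smul_apply,
    innerSL_apply_apply, smul_eq_mul]
  field_simp
  ring

lemma isOpen_ann (p q : ℝ) : IsOpen (ann p q) := by
  have h : ann p q = (fun x : E2 => ‖x‖) ⁻¹' (Set.Ioo p q) := rfl
  rw [h]; exact isOpen_Ioo.preimage continuous_norm

lemma measure_ann_lt_top (p q : ℝ) : volume (ann p q) < ⊤ := by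
  have h : ann p q ⊆ Metric.closedBall 0 |q| := by
    intro x hx
    simp only [Metric.mem_closedBall, dist_zero_right]
    exact le_trans hx.2.le (le_abs_self q)
  exact lt_of_le_of_lt (measure_mono h) measure_closedBall_lt_top

lemma integrableOn_ann {p q : ℝ} {f : E2 → ℝ} (hf : ContinuousOn f (ann p q)) {M : ℝ}
    (hM : ∀ x ∈ ann p q, |f x| ≤ M) : IntegrableOn f (ann p q) := by
  refine ⟨hf.aestronglyMeasurable (isOpen_ann p q).measurableSet, ?_⟩
  apply HasFiniteIntegral.restrict_of_bounded (C := M) (measure_ann_lt_top p q)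
  exact (ae_restrict_iff' (isOpen_ann p q).measurableSet).mpr
      (Filter.Eventually.of_forall (fun x hx => by simpa using hM x hx))

lemma integrableOn_prodS {p q : ℝ} {f : ℝ × ℝ → ℝ}
    (hf : ContinuousOn f (Set.Ioo p q ×ˢ Set.Ioo (-Real.pi) Real.pi)) {M : ℝ}
    (hM : ∀ w ∈ Set.Ioo p q ×ˢ Set.Ioo (-Real.pi) Real.pi, |f w| ≤ M) :
    IntegrableOn f (Set.Ioo p q ×ˢ Set.Ioo (-Real.pi) Real.pi) := by
  have hS : MeasurableSet (Set.Ioo p q ×ˢ Set.Ioo (-Real.pi) Real.pi) :=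
    measurableSet_Ioo.prod measurableSet_Ioo
  have hvol : volume (Set.Ioo p q ×ˢ Set.Ioo (-Real.pi) Real.pi) < ⊤ := by
    rw [MeasureTheory.Measure.volume_eq_prod, Measure.prod_prod, Real.volume_Ioo, Real.volume_Ioo]
    exact ENNReal.mul_lt_top ENNReal.ofReal_lt_top ENNReal.ofReal_lt_top
  refine ⟨hf.aestronglyMeasurable hS, ?_⟩
  apply HasFiniteIntegral.restrict_of_bounded (C := M) hvol
  exact (ae_restrict_iff' hS).mpr
      (Filter.Eventually.of_forall (fun w hw => by simpa using hM w hw))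

/-- the measurable equiv `ℝ × ℝ ≃ᵐ E2` -/
def e2equiv : (ℝ × ℝ) ≃ᵐ E2 :=
  (MeasurableEquiv.finTwoArrow).symm.trans (MeasurableEquiv.toLp 2 (Fin 2 → ℝ))

lemma e2equiv_apply (w : ℝ × ℝ) : e2equiv w = pt w.1 w.2 := by
  ext i
  fin_cases i <;> rfl

lemma e2equiv_measurePreserving : MeasurePreserving e2equiv :=
  ((EuclideanSpace.volume_preserving_symm_measurableEquiv_toLp (Fin 2)).symm _).comp
    ((volume_preserving_finTwoArrow ℝ).symm _)

lemma polar_eq {p q : ℝ} (hp : 0 < p) (f : E2 → ℝ)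
    (hint : IntegrableOn
      (fun w : ℝ × ℝ => w.1 * f (pt (w.1 * Real.cos w.2) (w.1 * Real.sin w.2)))
      (Set.Ioo p q ×ˢ Set.Ioo (-Real.pi) Real.pi)) :
    ∫ x in ann p q, f x
      = ∫ r in Set.Ioo p q, ∫ θ in Set.Ioo (-Real.pi) Real.pi,
          r * f (pt (r * Real.cos θ) (r * Real.sin θ)) := by
  have hmeasB : MeasurableSet (e2equiv ⁻¹' ann p q) :=
    e2equiv.measurable (isOpen_ann p q).measurableSet
  have hS : MeasurableSet (Set.Ioo p q ×ˢ Set.Ioo (-Real.pi) Real.pi) :=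
    measurableSet_Ioo.prod measurableSet_Ioo
  have step1 : ∫ x in ann p q, f x = ∫ w in e2equiv ⁻¹' ann p q, f (e2equiv w) :=
    (e2equiv_measurePreserving.setIntegral_preimage_emb e2equiv.measurableEmbedding _ _).symm
  have step2 : ∫ w in e2equiv ⁻¹' ann p q, f (e2equiv w)
      = ∫ w : ℝ × ℝ, Set.indicator (e2equiv ⁻¹' ann p q) (fun w => f (e2equiv w)) w :=
    (integral_indicator hmeasB).symm
  have step3 : ∫ w : ℝ × ℝ, Set.indicator (e2equiv ⁻¹' ann p q) (fun w => f (e2equiv w)) w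
      = ∫ w in polarCoord.target,
          w.1 • Set.indicator (e2equiv ⁻¹' ann p q) (fun w => f (e2equiv w)) (polarCoord.symm w) :=
    (integral_comp_polarCoord_symm _).symm
  have step4 : ∫ w in polarCoord.target,
        w.1 • Set.indicator (e2equiv ⁻¹' ann p q) (fun w => f (e2equiv w)) (polarCoord.symm w)
      = ∫ w in polarCoord.target,
          Set.indicator (Set.Ioo p q ×ˢ Set.Ioo (-Real.pi) Real.pi)
            (fun w : ℝ × ℝ => w.1 * f (pt (w.1 * Real.cos w.2) (w.1 * Real.sin w.2))) w := by
    apply setIntegral_congr_fun polarCoord.open_target.measurableSet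
    intro w hw
    rw [polarCoord_target] at hw
    have hw1 : 0 < w.1 := hw.1
    have hw2 : w.2 ∈ Set.Ioo (-Real.pi) Real.pi := hw.2
    have hsymm : polarCoord.symm w = (w.1 * Real.cos w.2, w.1 * Real.sin w.2) := rfl
    have hnorm := norm_pt_circle hw1.le w.2
    have happ : e2equiv (w.1 * Real.cos w.2, w.1 * Real.sin w.2)
        = pt (w.1 * Real.cos w.2) (w.1 * Real.sin w.2) := e2equiv_apply _
    have hiff : (polarCoord.symm w ∈ e2equiv ⁻¹' ann p q) ↔ (p < w.1 ∧ w.1 < q) := by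
      rw [hsymm]
      simp only [Set.mem_preimage, happ, ann, Set.mem_setOf_eq, hnorm]
    beta_reduce
    by_cases hmem : p < w.1 ∧ w.1 < q
    · rw [Set.indicator_of_mem (hiff.mpr hmem),
        Set.indicator_of_mem (Set.mem_prod.mpr ⟨Set.mem_Ioo.mpr hmem, hw2⟩), hsymm, happ,
        smul_eq_mul]
    · rw [Set.indicator_of_notMem (fun hc => hmem (hiff.mp hc)),
        Set.indicator_of_notMem
          (fun hc : w ∈ Set.Ioo p q ×ˢ Set.Ioo (-Real.pi) Real.pi => hmem ⟨hc.1.1, hc.1.2⟩),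
        smul_zero]
  have step5 : ∫ w in polarCoord.target,
        Set.indicator (Set.Ioo p q ×ˢ Set.Ioo (-Real.pi) Real.pi)
          (fun w : ℝ × ℝ => w.1 * f (pt (w.1 * Real.cos w.2) (w.1 * Real.sin w.2))) w
      = ∫ w in Set.Ioo p q ×ˢ Set.Ioo (-Real.pi) Real.pi,
          w.1 * f (pt (w.1 * Real.cos w.2) (w.1 * Real.sin w.2)) := by
    rw [setIntegral_indicator hS]
    congr 1
    rw [Set.inter_eq_self_of_subset_right]
    rw [polarCoord_target]
    exact Set.prod_mono (fun r hr => lt_trans hp hr.1) le_rfl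
  have step6 : ∫ w in Set.Ioo p q ×ˢ Set.Ioo (-Real.pi) Real.pi,
        w.1 * f (pt (w.1 * Real.cos w.2) (w.1 * Real.sin w.2))
      = ∫ r in Set.Ioo p q, ∫ θ in Set.Ioo (-Real.pi) Real.pi,
          r * f (pt (r * Real.cos θ) (r * Real.sin θ)) :=
    setIntegral_prod _ hint
  rw [step1, step2, step3, step4, step5, step6]

section main
variable {l : ℕ} {p q : ℝ} {Ω : Set E2} {u : E2 → Eu l} {C : ℝ}

lemma mem_Omega (hp : 0 < p) (hann : {x : E2 | p ≤ ‖x‖ ∧ ‖x‖ ≤ q} ⊆ Ω)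
    {r : ℝ} (hr : r ∈ Set.Icc p q) (θ : ℝ) :
    pt (r * Real.cos θ) (r * Real.sin θ) ∈ Ω := by
  apply hann
  rw [Set.mem_setOf_eq, norm_pt_circle (le_trans hp.le hr.1) θ]
  exact ⟨hr.1, hr.2⟩

/-- `∂_r u` along the circle of radius `r`, as a function of `(r, θ)`. -/
def Dmap (u : E2 → Eu l) : ℝ × ℝ → Eu l := fun w =>
  fderiv ℝ u (pt (w.1 * Real.cos w.2) (w.1 * Real.sin w.2)) (pt (Real.cos w.2) (Real.sin w.2))

/-- the angular mean of the radial derivative -/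
def hmean (u : E2 → Eu l) (r : ℝ) : Eu l :=
  (2 * Real.pi)⁻¹ • ∫ θ in (0:ℝ)..(2 * Real.pi), Dmap u (r, θ)

lemma continuous_curve :
    Continuous (fun w : ℝ × ℝ => pt (w.1 * Real.cos w.2) (w.1 * Real.sin w.2)) := by
  apply continuous_pt.comp (f := fun w : ℝ × ℝ => (w.1 * Real.cos w.2, w.1 * Real.sin w.2))
  fun_prop

lemma continuousOn_Dmap (hp : 0 < p) (hΩ : IsOpen Ω)
    (hann : {x : E2 | p ≤ ‖x‖ ∧ ‖x‖ ≤ q} ⊆ Ω) (hu : ContDiffOn ℝ (⊤ : ℕ∞) u Ω) :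
    ContinuousOn (Dmap u) (Set.Icc p q ×ˢ (Set.univ : Set ℝ)) := by
  have hfc : ContinuousOn (fderiv ℝ u) Ω := hu.continuousOn_fderiv_of_isOpen hΩ (by simp)
  have h1 : ContinuousOn (fun w : ℝ × ℝ =>
      fderiv ℝ u (pt (w.1 * Real.cos w.2) (w.1 * Real.sin w.2))) (Set.Icc p q ×ˢ Set.univ) := by
    apply hfc.comp continuous_curve.continuousOn
    intro w hw
    exact mem_Omega hp hann hw.1 w.2
  have h2 : Continuous (fun w : ℝ × ℝ => pt (Real.cos w.2) (Real.sin w.2)) := by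
    apply continuous_pt.comp (f := fun w : ℝ × ℝ => (Real.cos w.2, Real.sin w.2))
    fun_prop
  exact h1.clm_apply h2.continuousOn

lemma norm_Dmap_le (hp : 0 < p)
    (hC : ∀ x ∈ {x : E2 | p ≤ ‖x‖ ∧ ‖x‖ ≤ q}, ‖fderiv ℝ u x‖ ≤ C)
    {r : ℝ} (hr : r ∈ Set.Icc p q) (θ : ℝ) : ‖Dmap u (r, θ)‖ ≤ C := by
  have h1 : ‖Dmap u (r, θ)‖ ≤ ‖fderiv ℝ u (pt (r * Real.cos θ) (r * Real.sin θ))‖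
      * ‖pt (Real.cos θ) (Real.sin θ)‖ := ContinuousLinearMap.le_opNorm _ _
  rw [norm_pt_cs, mul_one] at h1
  refine h1.trans (hC _ ?_)
  rw [Set.mem_setOf_eq, norm_pt_circle (le_trans hp.le hr.1) θ]
  exact ⟨hr.1, hr.2⟩

lemma continuous_theta_u (hp : 0 < p) (hann : {x : E2 | p ≤ ‖x‖ ∧ ‖x‖ ≤ q} ⊆ Ω)
    (hu : ContDiffOn ℝ (⊤ : ℕ∞) u Ω) {r : ℝ} (hr : r ∈ Set.Icc p q) :
    Continuous (fun θ : ℝ => u (pt (r * Real.cos θ) (r * Real.sin θ))) := by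
  have hcurve : Continuous (fun θ : ℝ => pt (r * Real.cos θ) (r * Real.sin θ)) :=
    continuous_curve.comp (by fun_prop : Continuous fun θ : ℝ => ((r, θ) : ℝ × ℝ))
  exact hu.continuousOn.comp_continuous hcurve (fun θ => mem_Omega hp hann hr θ)

lemma continuous_theta_D (hp : 0 < p) (hΩ : IsOpen Ω)
    (hann : {x : E2 | p ≤ ‖x‖ ∧ ‖x‖ ≤ q} ⊆ Ω) (hu : ContDiffOn ℝ (⊤ : ℕ∞) u Ω)
    {r : ℝ} (hr : r ∈ Set.Icc p q) : Continuous (fun θ : ℝ => Dmap u (r, θ)) :=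
  (continuousOn_Dmap hp hΩ hann hu).comp_continuous
    (by fun_prop : Continuous fun θ : ℝ => ((r, θ) : ℝ × ℝ))
    (fun θ => Set.mem_prod.mpr ⟨hr, Set.mem_univ θ⟩)

lemma ball_subset_Icc {r₀ : ℝ} (hr : r₀ ∈ Set.Ioo p q) :
    Metric.ball r₀ (min (r₀ - p) (q - r₀)) ⊆ Set.Ioo p q := by
  intro r hrb
  rw [Metric.mem_ball, Real.dist_eq, abs_lt] at hrb
  constructor
  · nlinarith [hrb.1, min_le_left (r₀ - p) (q - r₀)]
  · nlinarith [hrb.2, min_le_right (r₀ - p) (q - r₀)]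

lemma stepA (hp : 0 < p) (hΩ : IsOpen Ω)
    (hann : {x : E2 | p ≤ ‖x‖ ∧ ‖x‖ ≤ q} ⊆ Ω) (hu : ContDiffOn ℝ (⊤ : ℕ∞) u Ω)
    (hC : ∀ x ∈ {x : E2 | p ≤ ‖x‖ ∧ ‖x‖ ≤ q}, ‖fderiv ℝ u x‖ ≤ C)
    {r₀ : ℝ} (hr : r₀ ∈ Set.Ioo p q) :
    HasDerivAt (amean u) (hmean u r₀) r₀ := by
  set ε := min (r₀ - p) (q - r₀) with hε
  have hεpos : 0 < ε := lt_min (by linarith [hr.1]) (by linarith [hr.2])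
  have hball := ball_subset_Icc (p := p) (q := q) hr
  have hballIcc : Metric.ball r₀ ε ⊆ Set.Icc p q := hball.trans Set.Ioo_subset_Icc_self
  have key : HasDerivAt
      (fun r => ∫ θ in (0:ℝ)..(2 * Real.pi), u (pt (r * Real.cos θ) (r * Real.sin θ)))
      (∫ θ in (0:ℝ)..(2 * Real.pi), Dmap u (r₀, θ)) r₀ := by
    have h := intervalIntegral.hasDerivAt_integral_of_dominated_loc_of_deriv_le
      (F := fun r θ => u (pt (r * Real.cos θ) (r * Real.sin θ)))
      (F' := fun r θ => Dmap u (r, θ)) (x₀ := r₀) (a := 0) (b := 2 * Real.pi)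
      (bound := fun _ => C) (μ := volume) (Metric.ball_mem_nhds r₀ hεpos) ?_ ?_ ?_ ?_ ?_ ?_
    · exact h.2
    · filter_upwards [Metric.ball_mem_nhds r₀ hεpos] with r hrb
      exact (continuous_theta_u hp hann hu (hballIcc hrb)).aestronglyMeasurable
    · exact (continuous_theta_u hp hann hu
        (hballIcc (Metric.mem_ball_self hεpos))).intervalIntegrable _ _
    · exact (continuous_theta_D hp hΩ hann hu
        (hballIcc (Metric.mem_ball_self hεpos))).aestronglyMeasurable
    · filter_upwards with θ _ r hrb
      exact norm_Dmap_le hp hC (hballIcc hrb) θ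
    · exact intervalIntegrable_const
    · filter_upwards with θ _ r hrb
      have hφ := hasDerivAt_pt (Real.cos θ) (Real.sin θ) r
      have hdu : DifferentiableAt ℝ u (pt (r * Real.cos θ) (r * Real.sin θ)) := by
        apply (hu.differentiableOn (by simp)).differentiableAt
        exact hΩ.mem_nhds (mem_Omega hp hann (hballIcc hrb) θ)
      exact hdu.hasFDerivAt.comp_hasDerivAt r hφ
  exact key.const_smul (2 * Real.pi)⁻¹

lemma hmean_continuousAt (hp : 0 < p) (hΩ : IsOpen Ω)
    (hann : {x : E2 | p ≤ ‖x‖ ∧ ‖x‖ ≤ q} ⊆ Ω) (hu : ContDiffOn ℝ (⊤ : ℕ∞) u Ω)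
    (hC : ∀ x ∈ {x : E2 | p ≤ ‖x‖ ∧ ‖x‖ ≤ q}, ‖fderiv ℝ u x‖ ≤ C)
    {r₀ : ℝ} (hr : r₀ ∈ Set.Ioo p q) :
    ContinuousAt (hmean u) r₀ := by
  have hεpos : 0 < min (r₀ - p) (q - r₀) := lt_min (by linarith [hr.1]) (by linarith [hr.2])
  have hIcc := (ball_subset_Icc (p := p) (q := q) hr).trans Set.Ioo_subset_Icc_self
  apply ContinuousAt.const_smul (c := (2 * Real.pi)⁻¹)
    (g := fun r => ∫ θ in (0:ℝ)..(2 * Real.pi), Dmap u (r, θ))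
  apply intervalIntegral.continuousAt_of_dominated_interval
    (bound := fun _ => C) (F := fun r θ => Dmap u (r, θ))
  · filter_upwards [Metric.ball_mem_nhds r₀ hεpos] with r hrb
    exact (continuous_theta_D hp hΩ hann hu (hIcc hrb)).aestronglyMeasurable
  · filter_upwards [Metric.ball_mem_nhds r₀ hεpos] with r hrb
    filter_upwards with θ _
    exact norm_Dmap_le hp hC (hIcc hrb) θ
  · exact intervalIntegrable_const
  · filter_upwards with θ _
    have hmem : Set.Icc p q ×ˢ (Set.univ : Set ℝ) ∈ 𝓝 ((r₀, θ) : ℝ × ℝ) :=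
      prod_mem_nhds (Icc_mem_nhds hr.1 hr.2) Filter.univ_mem
    have hD := (continuousOn_Dmap hp hΩ hann hu).continuousAt hmem
    exact ContinuousAt.comp (x := r₀) (f := fun r : ℝ => ((r, θ) : ℝ × ℝ)) (g := Dmap u) hD
      ((by fun_prop : Continuous fun r : ℝ => ((r, θ) : ℝ × ℝ)).continuousAt)

lemma hmean_norm_le (hp : 0 < p)
    (hC : ∀ x ∈ {x : E2 | p ≤ ‖x‖ ∧ ‖x‖ ≤ q}, ‖fderiv ℝ u x‖ ≤ C)
    {r : ℝ} (hr : r ∈ Set.Icc p q) : ‖hmean u r‖ ≤ C := by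
  have h1 : ‖∫ θ in (0:ℝ)..(2 * Real.pi), Dmap u (r, θ)‖ ≤ C * |2 * Real.pi - 0| :=
    intervalIntegral.norm_integral_le_of_norm_le_const
      (fun θ _ => norm_Dmap_le hp hC hr θ)
  have hpi : (0:ℝ) < 2 * Real.pi := by positivity
  rw [hmean, norm_smul, norm_inv, Real.norm_eq_abs, abs_of_pos hpi]
  rw [sub_zero, abs_of_pos hpi] at h1
  calc (2 * Real.pi)⁻¹ * ‖∫ θ in (0:ℝ)..(2 * Real.pi), Dmap u (r, θ)‖
      ≤ (2 * Real.pi)⁻¹ * (C * (2 * Real.pi)) := by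
        apply mul_le_mul_of_nonneg_left h1 (by positivity)
    _ = C := by field_simp
 
lemma stepB (hp : 0 < p) (hΩ : IsOpen Ω)
    (hann : {x : E2 | p ≤ ‖x‖ ∧ ‖x‖ ≤ q} ⊆ Ω) (hu : ContDiffOn ℝ (⊤ : ℕ∞) u Ω)
    (hC : ∀ x ∈ {x : E2 | p ≤ ‖x‖ ∧ ‖x‖ ≤ q}, ‖fderiv ℝ u x‖ ≤ C)
    {x : E2} (hx : x ∈ ann p q) :
    ∑ α : Fin 2, ⟪pd α u x, pd α (fun y => amean u ‖y‖) x⟫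
      = ⟪radialDeriv u x, hmean u ‖x‖⟫ := by
  have hr : ‖x‖ ∈ Set.Ioo p q := ⟨hx.1, hx.2⟩
  have hx0 : x ≠ 0 := by
    intro h
    rw [h, norm_zero] at hr
    exact absurd hr.1 (not_lt.mpr hp.le)
  have hN := hasFDerivAt_norm' hx0
  have hg : HasDerivAt (amean u) (hmean u ‖x‖) ‖x‖ := stepA hp hΩ hann hu hC hr
  have hv : HasFDerivAt (fun y : E2 => amean u ‖y‖)
      ((ContinuousLinearMap.smulRight (1 : ℝ →L[ℝ] ℝ) (hmean u ‖x‖)).comp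
        (‖x‖⁻¹ • innerSL ℝ x)) x :=
    (hasDerivAt_iff_hasFDerivAt.mp hg).comp x hN
  have hpd : ∀ α : Fin 2, pd α (fun y : E2 => amean u ‖y‖) x
      = (‖x‖⁻¹ * x α) • hmean u ‖x‖ := by
    intro α
    rw [pd, hv.fderiv]
    simp only [ContinuousLinearMap.coe_comp', Function.comp_apply,
      ContinuousLinearMap.smul_apply, ContinuousLinearMap.coe_smul', Pi.smul_apply,
      ContinuousLinearMap.smulRight_apply, ContinuousLinearMap.one_apply, innerSL_apply_apply,
      smul_eq_mul, EuclideanSpace.inner_single_right, RCLike.inner_apply, conj_trivial, one_mul,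
      mul_one]
  have hdu : DifferentiableAt ℝ u x := by
    apply (hu.differentiableOn (by simp)).differentiableAt
    apply hΩ.mem_nhds
    exact hann ⟨hr.1.le, hr.2.le⟩
  calc ∑ α : Fin 2, ⟪pd α u x, pd α (fun y => amean u ‖y‖) x⟫
      = ∑ α : Fin 2, ⟪(‖x‖⁻¹ * x α) • pd α u x, hmean u ‖x‖⟫ := by
        apply Finset.sum_congr rfl
        intro α _
        rw [hpd α, real_inner_smul_right, real_inner_smul_left]
    _ = ⟪∑ α : Fin 2, (‖x‖⁻¹ * x α) • pd α u x, hmean u ‖x‖⟫ := by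
        rw [sum_inner]
    _ = ⟪radialDeriv u x, hmean u ‖x‖⟫ := by
        congr 1
        rw [radialDeriv]
        have h : ∑ α : Fin 2, (‖x‖⁻¹ * x α) • pd α u x
            = fderiv ℝ u x (∑ α : Fin 2, (‖x‖⁻¹ * x α) • EuclideanSpace.single α 1) := by
          rw [map_sum]
          apply Finset.sum_congr rfl
          intro α _
          rw [ContinuousLinearMap.map_smul, pd]
        rw [h]
        congr 1
        simp only [mul_smul]
        rw [← Finset.smul_sum, pt_decomp]

lemma inner_int_zero (hp : 0 < p) (hΩ : IsOpen Ω)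
    (hann : {x : E2 | p ≤ ‖x‖ ∧ ‖x‖ ≤ q} ⊆ Ω) (hu : ContDiffOn ℝ (⊤ : ℕ∞) u Ω)
    {r : ℝ} (hr : r ∈ Set.Ioo p q) :
    ∫ θ in Set.Ioo (-Real.pi) Real.pi,
      r * ⟪radialDeriv u (pt (r * Real.cos θ) (r * Real.sin θ))
            - hmean u ‖pt (r * Real.cos θ) (r * Real.sin θ)‖,
          hmean u ‖pt (r * Real.cos θ) (r * Real.sin θ)‖⟫ = 0 := by
  have hrpos : 0 < r := lt_trans hp hr.1
  have hnorm : ∀ θ : ℝ, ‖pt (r * Real.cos θ) (r * Real.sin θ)‖ = r :=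
    fun θ => norm_pt_circle hrpos.le θ
  have hradial : ∀ θ : ℝ,
      radialDeriv u (pt (r * Real.cos θ) (r * Real.sin θ)) = Dmap u (r, θ) := by
    intro θ
    rw [radialDeriv, hnorm θ]
    congr 1
    rw [smul_pt]
    congr 1 <;> field_simp
  have heq : ∀ θ ∈ Set.Ioo (-Real.pi) Real.pi,
      r * ⟪radialDeriv u (pt (r * Real.cos θ) (r * Real.sin θ))
            - hmean u ‖pt (r * Real.cos θ) (r * Real.sin θ)‖,
          hmean u ‖pt (r * Real.cos θ) (r * Real.sin θ)‖⟫
        = r * ⟪hmean u r, Dmap u (r, θ) - hmean u r⟫ := by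
    intro θ _
    rw [hnorm θ, hradial θ, real_inner_comm]
  rw [setIntegral_congr_fun measurableSet_Ioo heq, integral_const_mul]
  have hDcont : Continuous (fun θ : ℝ => Dmap u (r, θ)) :=
    continuous_theta_D hp hΩ hann hu (Set.Ioo_subset_Icc_self hr)
  have hDint : IntegrableOn (fun θ : ℝ => Dmap u (r, θ) - hmean u r)
      (Set.Ioo (-Real.pi) Real.pi) :=
    ((hDcont.sub continuous_const).integrableOn_Icc).mono_set Set.Ioo_subset_Icc_self
  rw [integral_inner hDint (hmean u r)]
  have hvol : (volume (Set.Ioo (-Real.pi) Real.pi)).toReal = 2 * Real.pi := by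
    rw [Real.volume_Ioo, ENNReal.toReal_ofReal (by linarith [Real.pi_pos])]
    ring
  have hIoo : ∫ θ in Set.Ioo (-Real.pi) Real.pi, (Dmap u (r, θ) - hmean u r)
      = (∫ θ in Set.Ioo (-Real.pi) Real.pi, Dmap u (r, θ)) - (2 * Real.pi) • hmean u r := by
    rw [integral_sub (hDcont.integrableOn_Icc.mono_set Set.Ioo_subset_Icc_self)
      ((integrableOn_const_iff enorm_ne_top).mpr (Or.inr (by rw [Real.volume_Ioo]; exact ENNReal.ofReal_lt_top)))]
    congr 1
    rw [setIntegral_const, measureReal_def, hvol]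
  have hper : Function.Periodic (fun θ : ℝ => Dmap u (r, θ)) (2 * Real.pi) := by
    intro θ
    simp [Dmap, Real.cos_add_two_pi, Real.sin_add_two_pi]
  have h02 : ∫ θ in Set.Ioo (-Real.pi) Real.pi, Dmap u (r, θ)
      = (2 * Real.pi) • hmean u r := by
    have h1 : ∫ θ in Set.Ioo (-Real.pi) Real.pi, Dmap u (r, θ)
        = ∫ θ in (-Real.pi)..Real.pi, Dmap u (r, θ) := by
      rw [intervalIntegral.integral_of_le (by linarith [Real.pi_pos]),
        integral_Ioc_eq_integral_Ioo]
    have h2 := hper.intervalIntegral_add_eq (-Real.pi) 0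
    have h3 : -Real.pi + 2 * Real.pi = Real.pi := by ring
    rw [h3, zero_add] at h2
    rw [h1, h2, hmean, smul_smul]
    rw [mul_inv_cancel₀ (by positivity : (2 * Real.pi) ≠ 0), one_smul]
  rw [hIoo, h02, sub_self, inner_zero_right, mul_zero]

end main
end aux

set_option maxHeartbeats 1000000

/-- for a smooth map `u` on a neighbourhood of the closed annulus
`{p ≤ |x| ≤ q}` (`0 < p < q`) and `v(x) = u*(|x|)` the radial map given by the angular mean
of `u`, one has `∫_{A(p,q)} ∑_α ⟨∂_α u, ∂_α v⟩ ≤ ∫_{A(p,q)} |∂_r u|²`. -/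
theorem angular_mean_energy_bound {l : ℕ} (p q : ℝ) (hp : 0 < p) (hpq : p ≤ q)
    (Ω : Set E2) (hΩ : IsOpen Ω) (hann : {x : E2 | p ≤ ‖x‖ ∧ ‖x‖ ≤ q} ⊆ Ω)
    (u : E2 → Eu l) (hu : ContDiffOn ℝ (⊤ : ℕ∞) u Ω) :
    (∫ x in ann p q, ∑ α : Fin 2, ⟪pd α u x, pd α (fun y => amean u ‖y‖) x⟫)
      ≤ ∫ x in ann p q, ‖radialDeriv u x‖ ^ 2 := by
  rcases eq_or_lt_of_le hpq with heq | hlt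
  · have hempty : ann p q = (∅ : Set E2) := by
      ext x
      simp only [ann, Set.mem_setOf_eq, Set.mem_empty_iff_false, iff_false, not_and, not_lt]
      intro h1
      rw [← heq]
      exact h1.le
    rw [hempty]
    simp
  -- main case p < q
  -- compactness and the derivative bound
  have hKclosed : IsClosed {x : E2 | p ≤ ‖x‖ ∧ ‖x‖ ≤ q} := by
    have h : {x : E2 | p ≤ ‖x‖ ∧ ‖x‖ ≤ q} = (fun x : E2 => ‖x‖) ⁻¹' (Set.Icc p q) := rfl
    rw [h]
    exact isClosed_Icc.preimage continuous_norm
  have hKbdd : Bornology.IsBounded {x : E2 | p ≤ ‖x‖ ∧ ‖x‖ ≤ q} := by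
    apply Bornology.IsBounded.subset (Metric.isBounded_closedBall (x := (0:E2)) (r := q))
    intro x hx
    simpa [Metric.mem_closedBall, dist_zero_right] using hx.2
  have hKcompact : IsCompact {x : E2 | p ≤ ‖x‖ ∧ ‖x‖ ≤ q} :=
    Metric.isCompact_of_isClosed_isBounded hKclosed hKbdd
  have hfc : ContinuousOn (fderiv ℝ u) Ω := hu.continuousOn_fderiv_of_isOpen hΩ (by simp)
  obtain ⟨C₀, hC₀⟩ := hKcompact.exists_bound_of_continuousOn (hfc.mono hann)
  set C := max C₀ 0 with hCdef
  have hC : ∀ x ∈ {x : E2 | p ≤ ‖x‖ ∧ ‖x‖ ≤ q}, ‖fderiv ℝ u x‖ ≤ C :=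
    fun x hx => (hC₀ x hx).trans (le_max_left _ _)
  have hC0 : (0:ℝ) ≤ C := le_max_right _ _
  have hannK : ann p q ⊆ {x : E2 | p ≤ ‖x‖ ∧ ‖x‖ ≤ q} := fun x hx => ⟨hx.1.le, hx.2.le⟩
  have hmeas := (isOpen_ann p q).measurableSet
  -- continuity of the two main fields on the annulus
  have hRcont : ContinuousOn (fun x : E2 => radialDeriv u x) (ann p q) := by
    have h1 : ContinuousOn (fun x : E2 => fderiv ℝ u x) (ann p q) :=
      hfc.mono (hannK.trans hann)
    have h2 : ContinuousOn (fun x : E2 => ‖x‖⁻¹ • x) (ann p q) := by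
      apply ContinuousOn.smul (f := fun x : E2 => ‖x‖⁻¹) (g := fun x : E2 => x)
      · exact (continuous_norm.continuousOn).inv₀
          (fun x hx => ne_of_gt (lt_trans hp hx.1))
      · exact continuous_id.continuousOn
    exact h1.clm_apply h2
  have hRbound : ∀ x ∈ ann p q, ‖radialDeriv u x‖ ≤ C := by
    intro x hx
    have hx0 : ‖x‖ ≠ 0 := ne_of_gt (lt_trans hp hx.1)
    have h1 : ‖radialDeriv u x‖ ≤ ‖fderiv ℝ u x‖ * ‖‖x‖⁻¹ • x‖ :=
      ContinuousLinearMap.le_opNorm _ _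
    have h2 : ‖‖x‖⁻¹ • x‖ = 1 := by
      rw [norm_smul, norm_inv, norm_norm, inv_mul_cancel₀ hx0]
    rw [h2, mul_one] at h1
    exact h1.trans (hC x (hannK hx))
  have hHcont : ContinuousOn (fun x : E2 => hmean u ‖x‖) (ann p q) := by
    intro x hx
    have hca : ContinuousAt (hmean u) ‖x‖ :=
      hmean_continuousAt hp hΩ hann hu hC ⟨hx.1, hx.2⟩
    exact (hca.comp continuous_norm.continuousAt).continuousWithinAt
  have hHbound : ∀ x ∈ ann p q, ‖hmean u ‖x‖‖ ≤ C :=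
    fun x hx => hmean_norm_le hp hC ⟨hx.1.le, hx.2.le⟩
  -- integrability facts on the annulus
  have hIa : IntegrableOn (fun x : E2 => ⟪radialDeriv u x, hmean u ‖x‖⟫) (ann p q) := by
    apply integrableOn_ann (hRcont.inner hHcont) (M := C * C)
    intro x hx
    exact (abs_real_inner_le_norm _ _).trans
      (mul_le_mul (hRbound x hx) (hHbound x hx) (norm_nonneg _) hC0)
  have hIb : IntegrableOn (fun x : E2 => ‖hmean u ‖x‖‖ ^ 2) (ann p q) := by
    apply integrableOn_ann ((hHcont.norm).pow 2) (M := C ^ 2)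
    intro x hx
    show |‖hmean u ‖x‖‖ ^ 2| ≤ C ^ 2
    rw [abs_of_nonneg (by positivity : (0:ℝ) ≤ ‖hmean u ‖x‖‖ ^ 2)]
    exact pow_le_pow_left₀ (norm_nonneg _) (hHbound x hx) 2
  have hIr2 : IntegrableOn (fun x : E2 => ‖radialDeriv u x‖ ^ 2) (ann p q) := by
    apply integrableOn_ann ((hRcont.norm).pow 2) (M := C ^ 2)
    intro x hx
    show |‖radialDeriv u x‖ ^ 2| ≤ C ^ 2
    rw [abs_of_nonneg (by positivity : (0:ℝ) ≤ ‖radialDeriv u x‖ ^ 2)]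
    exact pow_le_pow_left₀ (norm_nonneg _) (hRbound x hx) 2
  -- the key polar-coordinates identity
  have hkey : ∫ x in ann p q, ⟪radialDeriv u x - hmean u ‖x‖, hmean u ‖x‖⟫ = 0 := by
    have hcurvemem : ∀ w ∈ Set.Ioo p q ×ˢ Set.Ioo (-Real.pi) Real.pi,
        pt (w.1 * Real.cos w.2) (w.1 * Real.sin w.2) ∈ ann p q := by
      intro w hw
      have := norm_pt_circle (lt_trans hp hw.1.1).le w.2
      exact ⟨by rw [this]; exact hw.1.1, by rw [this]; exact hw.1.2⟩
    have hf0cont : ContinuousOn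
        (fun y : E2 => ⟪radialDeriv u y - hmean u ‖y‖, hmean u ‖y‖⟫) (ann p q) :=
      (hRcont.sub hHcont).inner hHcont
    have hGcont : ContinuousOn
        (fun w : ℝ × ℝ => w.1 * ⟪radialDeriv u (pt (w.1 * Real.cos w.2) (w.1 * Real.sin w.2))
            - hmean u ‖pt (w.1 * Real.cos w.2) (w.1 * Real.sin w.2)‖,
          hmean u ‖pt (w.1 * Real.cos w.2) (w.1 * Real.sin w.2)‖⟫)
        (Set.Ioo p q ×ˢ Set.Ioo (-Real.pi) Real.pi) :=
      (continuous_fst.continuousOn).mul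
        (hf0cont.comp continuous_curve.continuousOn hcurvemem)
    have hGbound : ∀ w ∈ Set.Ioo p q ×ˢ Set.Ioo (-Real.pi) Real.pi,
        |w.1 * ⟪radialDeriv u (pt (w.1 * Real.cos w.2) (w.1 * Real.sin w.2))
            - hmean u ‖pt (w.1 * Real.cos w.2) (w.1 * Real.sin w.2)‖,
          hmean u ‖pt (w.1 * Real.cos w.2) (w.1 * Real.sin w.2)‖⟫| ≤ q * ((C + C) * C) := by
      intro w hw
      have hy := hcurvemem w hw
      set y := pt (w.1 * Real.cos w.2) (w.1 * Real.sin w.2)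
      rw [abs_mul]
      apply mul_le_mul
      · rw [abs_of_pos (lt_trans hp hw.1.1)]
        exact hw.1.2.le
      · refine (abs_real_inner_le_norm _ _).trans ?_
        apply mul_le_mul _ (hHbound y hy) (norm_nonneg _) (by positivity)
        exact (norm_sub_le _ _).trans (add_le_add (hRbound y hy) (hHbound y hy))
      · positivity
      · linarith [lt_trans hp hlt]
    have hint := integrableOn_prodS hGcont hGbound
    rw [polar_eq hp
      (fun y : E2 => ⟪radialDeriv u y - hmean u ‖y‖, hmean u ‖y‖⟫) hint]
    rw [setIntegral_congr_fun measurableSet_Ioo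
      (fun r hr => inner_int_zero hp hΩ hann hu hr)]
    simp
  -- conclude
  have hL : ∫ x in ann p q, ∑ α : Fin 2, ⟪pd α u x, pd α (fun y => amean u ‖y‖) x⟫
      = ∫ x in ann p q, ⟪radialDeriv u x, hmean u ‖x‖⟫ :=
    setIntegral_congr_fun hmeas (fun x hx => stepB hp hΩ hann hu hC hx)
  have hsplit : ∫ x in ann p q, ⟪radialDeriv u x, hmean u ‖x‖⟫
      = ∫ x in ann p q, ‖hmean u ‖x‖‖ ^ 2 := by
    have heq1 : ∀ x ∈ ann p q, ⟪radialDeriv u x - hmean u ‖x‖, hmean u ‖x‖⟫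
        = ⟪radialDeriv u x, hmean u ‖x‖⟫ - ‖hmean u ‖x‖‖ ^ 2 := by
      intro x _
      rw [inner_sub_left, real_inner_self_eq_norm_sq]
    rw [setIntegral_congr_fun hmeas heq1, integral_sub hIa hIb] at hkey
    linarith
  have hpos : (0:ℝ) ≤ ∫ x in ann p q, ‖radialDeriv u x - hmean u ‖x‖‖ ^ 2 :=
    setIntegral_nonneg hmeas (fun x _ => sq_nonneg _)
  have hexpand : ∫ x in ann p q, ‖radialDeriv u x - hmean u ‖x‖‖ ^ 2
      = (∫ x in ann p q, ‖radialDeriv u x‖ ^ 2)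
        - 2 * (∫ x in ann p q, ⟪radialDeriv u x, hmean u ‖x‖⟫)
        + ∫ x in ann p q, ‖hmean u ‖x‖‖ ^ 2 := by
    have heq2 : ∀ x ∈ ann p q, ‖radialDeriv u x - hmean u ‖x‖‖ ^ 2
        = ‖radialDeriv u x‖ ^ 2 - 2 * ⟪radialDeriv u x, hmean u ‖x‖⟫
          + ‖hmean u ‖x‖‖ ^ 2 := fun x _ => norm_sub_sq_real _ _
    rw [setIntegral_congr_fun hmeas heq2]
    have hI2 : IntegrableOn
        (fun x : E2 => 2 * ⟪radialDeriv u x, hmean u ‖x‖⟫) (ann p q) := hIa.const_mul 2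
    have hI1 : IntegrableOn
        (fun x : E2 => ‖radialDeriv u x‖ ^ 2 - 2 * ⟪radialDeriv u x, hmean u ‖x‖⟫)
        (ann p q) := hIr2.sub hI2
    rw [integral_add hI1 hIb, integral_sub hIr2 hI2, integral_const_mul]
  rw [hL]
  linarith

end
end

section
/- Let t > 0 and let u : Ω → ℝ^l be a smooth map on an open neighbourhood Ω of the circle {|x| = t} in ℝ². Then |∫_{∂B_t} ⟨∂_r u, u − u*(t)⟩ dS| ≤ (t/2) ∫_{∂B_t} |∇u|² dS. -/
open scoped RealInnerProductSpace
open Filter MeasureTheory Metric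

noncomputable section

namespace BTB

open Real MeasureTheory AddCircle intervalIntegral

lemma parseval_cont (T : ℝ) [hT : Fact (0 < T)] (G : C(AddCircle T, ℂ)) :
    Summable (fun n : ℤ => ‖fourierCoeff (⇑G) n‖ ^ 2) ∧
    (∑' n : ℤ, ‖fourierCoeff (⇑G) n‖ ^ 2) * T = ∫ x in (0:ℝ)..T, ‖G (x : ℝ)‖ ^ 2 := by
  set Gl := ContinuousMap.toLp (E := ℂ) 2 haarAddCircle ℂ G with hGl
  have hc : ∀ n, fourierCoeff (Gl : AddCircle T → ℂ) n = fourierCoeff (⇑G) n :=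
    fourierCoeff_toLp G
  constructor
  · have hm := lp.memℓp (fourierBasis.repr Gl)
    have hs := (memℓp_gen_iff (by norm_num : (0:ℝ) < (2 : ENNReal).toReal)).1 hm
    have : (fun n : ℤ => ‖fourierBasis.repr Gl n‖ ^ ((2:ENNReal).toReal)) =
        fun n : ℤ => ‖fourierCoeff (⇑G) n‖ ^ 2 := by
      funext n
      rw [fourierBasis_repr, hc]
      norm_num [Real.rpow_natCast]
    rwa [this] at hs
  · have hP := tsum_sq_fourierCoeff Gl
    simp_rw [hc] at hP
    have h2 : ∫ t, ‖Gl t‖ ^ 2 ∂haarAddCircle = ∫ t, ‖G t‖ ^ 2 ∂haarAddCircle := by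
      apply MeasureTheory.integral_congr_ae
      filter_upwards [ContinuousMap.coeFn_toLp (E := ℂ) (p := 2) haarAddCircle (𝕜 := ℂ) G]
        with x hx
      rw [hx]
    have h3 : ∫ x in (0:ℝ)..T, ‖G (x : ℝ)‖ ^ 2 = ∫ b : AddCircle T, ‖G b‖ ^ 2 := by
      have := AddCircle.intervalIntegral_preimage T 0 (fun b : AddCircle T => ‖G b‖ ^ 2)
      rwa [zero_add] at this
    have h4 : ∫ b : AddCircle T, ‖G b‖ ^ 2 = T * ∫ b, ‖G b‖ ^ 2 ∂haarAddCircle := by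
      rw [AddCircle.volume_eq_smul_haarAddCircle, MeasureTheory.integral_smul_measure _ _,
        ENNReal.toReal_ofReal hT.out.le, smul_eq_mul]
    rw [h3, h4, ← h2, ← hP]
    ring

open Complex in
lemma wirtinger (f f' : ℝ → ℝ) (hper : Function.Periodic f (2*π))
    (hd : ∀ x, HasDerivAt f (f' x) x) (hc' : Continuous f')
    (hmean : ∫ x in (0:ℝ)..(2*π), f x = 0) :
    ∫ x in (0:ℝ)..(2*π), (f x)^2 ≤ ∫ x in (0:ℝ)..(2*π), (f' x)^2 := by
  have hπ : (0:ℝ) < 2*π := by positivity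
  haveI : Fact ((0:ℝ) < 2*π) := ⟨hπ⟩
  have hper' : Function.Periodic f' (2*π) := by
    intro x
    have h1 : HasDerivAt (fun y => f (y + 2*π)) (f' (x + 2*π)) x := by
      simpa [Function.comp_def] using (hd (x + 2*π)).comp x ((hasDerivAt_id x).add_const (2*π))
    have h2 : (fun y => f (y + 2*π)) = f := funext fun y => hper y
    rw [h2] at h1
    exact h1.unique (hd x)
  have hf : Continuous f := by
    rw [continuous_iff_continuousAt]; exact fun x => (hd x).continuousAt
  set F : ℝ → ℂ := fun x => (f x : ℂ) with hF
  set F' : ℝ → ℂ := fun x => (f' x : ℂ) with hF'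
  have hFc : Continuous F := Complex.continuous_ofReal.comp hf
  have hFc' : Continuous F' := Complex.continuous_ofReal.comp hc'
  have hF0 : F 0 = F (2*π) := by simp only [hF]; norm_cast; simpa using (hper 0).symm
  have hF0' : F' 0 = F' (2*π) := by simp only [hF']; norm_cast; simpa using (hper' 0).symm
  set G : C(AddCircle (2*π), ℂ) :=
    ⟨AddCircle.liftIco (2*π) 0 F, AddCircle.liftIco_zero_continuous hF0 hFc.continuousOn⟩ with hG
  set G' : C(AddCircle (2*π), ℂ) :=
    ⟨AddCircle.liftIco (2*π) 0 F', AddCircle.liftIco_zero_continuous hF0' hFc'.continuousOn⟩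
    with hG'
  have hab : (0:ℝ) < 0 + 2*π := by linarith
  have hGc : ∀ n, fourierCoeff (⇑G) n = fourierCoeffOn hab F n := fun n =>
    fourierCoeff_liftIco_eq F n
  have hGc' : ∀ n, fourierCoeff (⇑G') n = fourierCoeffOn hab F' n := fun n =>
    fourierCoeff_liftIco_eq F' n
  have hc0 : fourierCoeff (⇑G) 0 = 0 := by
    rw [hGc, fourierCoeffOn_eq_integral]
    simp only [fourier_zero, one_smul, neg_zero, zero_add]
    rw [intervalIntegral.integral_ofReal (f := f)]
    rw [hmean]
    simp
  have hrel : ∀ n : ℤ, n ≠ 0 → fourierCoeff (⇑G') n = Complex.I * n * fourierCoeff (⇑G) n := by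
    intro n hn
    have heq := fourierCoeffOn_of_hasDerivAt hab hn
      (fun x _ => (hd x).ofReal_comp) (hFc'.intervalIntegrable 0 (0 + 2*π))
    have hFF : F (0 + 2*π) - F 0 = 0 := by rw [zero_add, ← hF0, sub_self]
    rw [hFF, mul_zero, zero_sub] at heq
    rw [hGc, hGc', heq]
    have hπ0 : (π:ℂ) ≠ 0 := Complex.ofReal_ne_zero.mpr Real.pi_ne_zero
    have hn0 : (n:ℂ) ≠ 0 := Int.cast_ne_zero.mpr hn
    have hI := Complex.I_ne_zero
    push_cast
    field_simp
    ring
  have hnorm : ∀ n : ℤ, ‖fourierCoeff (⇑G) n‖ ^ 2 ≤ ‖fourierCoeff (⇑G') n‖ ^ 2 := by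
    intro n
    rcases eq_or_ne n 0 with rfl | hn
    · rw [hc0]; simp only [norm_zero]; nlinarith [sq_nonneg (‖fourierCoeff (⇑G') 0‖)]
    · rw [hrel n hn]
      have h1 : (1:ℝ) ≤ |(n:ℝ)| := by
        rw [← Int.cast_abs]; exact_mod_cast Int.one_le_abs hn
      rw [norm_mul, norm_mul, Complex.norm_I, one_mul, Complex.norm_intCast]
      rw [mul_pow]
      have h1sq : 1 ≤ |(n:ℝ)|^2 := by nlinarith
      nlinarith [mul_le_mul_of_nonneg_right h1sq (sq_nonneg (‖fourierCoeff (⇑G) n‖))]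
  obtain ⟨hs1, he1⟩ := parseval_cont (2*π) G
  obtain ⟨hs2, he2⟩ := parseval_cont (2*π) G'
  have hts := Summable.tsum_le_tsum hnorm hs1 hs2
  have hint : ∀ (H : ℝ → ℂ) (HH : Continuous H) (h0 : H 0 = H (2*π)),
      (∫ x in (0:ℝ)..(2*π), ‖(⟨AddCircle.liftIco (2*π) 0 H,
        AddCircle.liftIco_zero_continuous h0 HH.continuousOn⟩ : C(AddCircle (2*π), ℂ))
        ((x:ℝ) : AddCircle (2*π))‖ ^ 2) = ∫ x in (0:ℝ)..(2*π), ‖H x‖ ^ 2 := by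
    intro H HH h0
    apply intervalIntegral.integral_congr
    intro x hx
    rw [Set.uIcc_of_le hπ.le] at hx
    simp only [ContinuousMap.coe_mk]
    rcases eq_or_lt_of_le hx.2 with h2 | h2
    · have : ((x:ℝ) : AddCircle (2*π)) = ((0:ℝ) : AddCircle (2*π)) := by
        rw [h2, AddCircle.coe_period]; norm_cast
      rw [this, AddCircle.liftIco_zero_coe_apply ⟨le_refl 0, hπ⟩, h0, h2]
    · rw [AddCircle.liftIco_zero_coe_apply ⟨hx.1, h2⟩]
  have he1' := he1; have he2' := he2
  rw [hint F hFc hF0] at he1'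
  rw [hint F' hFc' hF0'] at he2'
  have hfin : (∫ x in (0:ℝ)..(2*π), ‖F x‖ ^ 2) ≤ ∫ x in (0:ℝ)..(2*π), ‖F' x‖ ^ 2 := by
    rw [← he1', ← he2']
    exact mul_le_mul_of_nonneg_right hts hπ.le
  have hFn : ∀ x:ℝ, ‖F x‖ ^ 2 = (f x)^2 := by
    intro x; simp only [hF, hF', Complex.norm_real, Real.norm_eq_abs, _root_.sq_abs]
  have hFn' : ∀ x:ℝ, ‖F' x‖ ^ 2 = (f' x)^2 := by
    intro x; simp only [hF, hF', Complex.norm_real, Real.norm_eq_abs, _root_.sq_abs]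
  simpa only [hFn, hFn'] using hfin

lemma normsq_eq {l : ℕ} (v : Eu l) : ‖v‖^2 = ∑ i, (v i)^2 := by
  rw [EuclideanSpace.norm_eq, Real.sq_sqrt (by positivity)]
  simp [Real.norm_eq_abs, _root_.sq_abs]

lemma wirtinger_vec {l : ℕ} (g g' : ℝ → Eu l)
    (hper : Function.Periodic g (2*π))
    (hd : ∀ x, HasDerivAt g (g' x) x) (hc' : Continuous g')
    (hmean : ∫ x in (0:ℝ)..(2*π), g x = 0) :
    ∫ x in (0:ℝ)..(2*π), ‖g x‖^2 ≤ ∫ x in (0:ℝ)..(2*π), ‖g' x‖^2 := by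
  have hg : Continuous g := by
    rw [continuous_iff_continuousAt]; exact fun x => (hd x).continuousAt
  have hcon : ∀ i : Fin l, Continuous (fun x => g x i) :=
    fun i => (EuclideanSpace.proj i).continuous.comp hg
  have hcon' : ∀ i : Fin l, Continuous (fun x => g' x i) :=
    fun i => (EuclideanSpace.proj i).continuous.comp hc'
  have key : ∀ i : Fin l,
      ∫ x in (0:ℝ)..(2*π), (g x i)^2 ≤ ∫ x in (0:ℝ)..(2*π), (g' x i)^2 := by
    intro i
    apply wirtinger (fun x => g x i) (fun x => g' x i)
    · intro x
      have := hper x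
      simp [Function.Periodic, this]
    · intro x
      exact ((EuclideanSpace.proj (𝕜 := ℝ) i).hasFDerivAt).comp_hasDerivAt x (hd x)
    · exact hcon' i
    · have := congrArg (fun v : Eu l => (EuclideanSpace.proj (𝕜 := ℝ) i) v) hmean
      simpa [← (EuclideanSpace.proj (𝕜 := ℝ) i).intervalIntegral_comp_comm
        (hg.intervalIntegrable _ _)] using this
  calc ∫ x in (0:ℝ)..(2*π), ‖g x‖^2
      = ∑ i, ∫ x in (0:ℝ)..(2*π), (g x i)^2 := by
        rw [← intervalIntegral.integral_finset_sum]
        · simp_rw [normsq_eq]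
        · exact fun i _ => ((hcon i).pow 2).intervalIntegrable _ _
    _ ≤ ∑ i, ∫ x in (0:ℝ)..(2*π), (g' x i)^2 := Finset.sum_le_sum fun i _ => key i
    _ = ∫ x in (0:ℝ)..(2*π), ‖g' x‖^2 := by
        rw [← intervalIntegral.integral_finset_sum]
        · simp_rw [normsq_eq]
        · exact fun i _ => ((hcon' i).pow 2).intervalIntegrable _ _

lemma pt_apply_0 (a b : ℝ) : pt a b 0 = a := rfl

lemma pt_apply_1 (a b : ℝ) : pt a b 1 = b := rfl

lemma pt_decomp (a b : ℝ) :
    pt a b = a • EuclideanSpace.single (0 : Fin 2) (1:ℝ)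
      + b • EuclideanSpace.single (1 : Fin 2) (1:ℝ) := by
  ext i
  fin_cases i <;>
    simp [pt, EuclideanSpace.single_apply]

lemma norm_pt_sq (a b : ℝ) : ‖pt a b‖^2 = a^2 + b^2 := by
  rw [normsq_eq (pt a b)]
  rw [Fin.sum_univ_two, pt_apply_0, pt_apply_1]

lemma continuous_pt {f g : ℝ → ℝ} (hf : Continuous f) (hg : Continuous g) :
    Continuous fun x => pt (f x) (g x) := by
  simp_rw [pt_decomp]
  exact (hf.smul continuous_const).add (hg.smul continuous_const)

lemma hasDerivAt_gamma (t θ : ℝ) :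
    HasDerivAt (fun θ => pt (t * Real.cos θ) (t * Real.sin θ))
      (pt (-(t * Real.sin θ)) (t * Real.cos θ)) θ := by
  simp_rw [pt_decomp]
  apply HasDerivAt.add
  · have hc : HasDerivAt (fun θ => t * Real.cos θ) (-(t * Real.sin θ)) θ := by
      simpa [mul_comm] using (Real.hasDerivAt_cos θ).const_mul t
    exact hc.smul_const _
  · have hs : HasDerivAt (fun θ => t * Real.sin θ) (t * Real.cos θ) θ := by
      simpa [mul_comm] using (Real.hasDerivAt_sin θ).const_mul t
    exact hs.smul_const _

open scoped RealInnerProductSpace in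
lemma norm_smul_add_smul {l : ℕ} (a b : Eu l) (c s : ℝ) :
    ‖c • a + s • b‖^2 = c^2*‖a‖^2 + 2*(c*s)*⟪a, b⟫ + s^2*‖b‖^2 := by
  rw [norm_add_sq_real, norm_smul, norm_smul, real_inner_smul_left, real_inner_smul_right,
    mul_pow, mul_pow]
  simp only [Real.norm_eq_abs, _root_.sq_abs]
  ring

end BTB


/-- for a smooth map `u` on a neighbourhood of the circle `{|x| = t}` (`t > 0`),
`|∫_{∂B_t} ⟨∂_r u, u − u*(t)⟩ dS| ≤ (t/2) ∫_{∂B_t} |∇u|² dS`. -/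
theorem boundary_term_bound {l : ℕ} (t : ℝ) (ht : 0 < t)
    (Ω : Set E2) (hΩ : IsOpen Ω) (hcirc : {x : E2 | ‖x‖ = t} ⊆ Ω)
    (u : E2 → Eu l) (hu : ContDiffOn ℝ (⊤ : ℕ∞) u Ω) :
    |circInt t (fun x => ⟪radialDeriv u x, u x - amean u t⟫)|
      ≤ (t / 2) * circInt t (fun x => gradSq u x) := by
  have hπ : (0:ℝ) < 2 * Real.pi := by positivity
  set γ : ℝ → E2 := fun θ => pt (t * Real.cos θ) (t * Real.sin θ) with hγdef
  have hγsq : ∀ θ, ‖γ θ‖^2 = t^2 := by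
    intro θ
    rw [hγdef]
    rw [BTB.norm_pt_sq]
    nlinarith [Real.sin_sq_add_cos_sq θ]
  have hγnorm : ∀ θ, ‖γ θ‖ = t := by
    intro θ
    rw [← Real.sqrt_sq (norm_nonneg (γ θ)), hγsq θ, Real.sqrt_sq ht.le]
  have hγΩ : ∀ θ, γ θ ∈ Ω := fun θ => hcirc (hγnorm θ)
  have hγcont : Continuous γ :=
    BTB.continuous_pt (continuous_const.mul Real.continuous_cos)
      (continuous_const.mul Real.continuous_sin)
  have hudiff : ∀ θ, HasFDerivAt u (fderiv ℝ u (γ θ)) (γ θ) := fun θ =>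
    ((hu.differentiableOn (by simp)).differentiableAt (hΩ.mem_nhds (hγΩ θ))).hasFDerivAt
  set A : ℝ → (E2 →L[ℝ] Eu l) := fun θ => fderiv ℝ u (γ θ) with hA
  have hAc : Continuous A :=
    (hu.continuousOn_fderiv_of_isOpen hΩ (by simp)).comp_continuous hγcont hγΩ
  set g : ℝ → Eu l := fun θ => u (γ θ) with hgdef
  set g' : ℝ → Eu l := fun θ => A θ (pt (-(t * Real.sin θ)) (t * Real.cos θ)) with hg'def
  have hgd : ∀ θ, HasDerivAt g (g' θ) θ := fun θ =>
    (hudiff θ).comp_hasDerivAt θ (BTB.hasDerivAt_gamma t θ)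
  have hgc : Continuous g := by
    rw [continuous_iff_continuousAt]; exact fun θ => (hgd θ).continuousAt
  have hg'c : Continuous g' := hAc.clm_apply
    (BTB.continuous_pt ((continuous_const.mul Real.continuous_sin).neg)
      (continuous_const.mul Real.continuous_cos))
  set r : ℝ → Eu l := fun θ => A θ (t⁻¹ • γ θ) with hrdef
  have hradeq : ∀ θ, radialDeriv u (γ θ) = r θ := by
    intro θ
    rw [radialDeriv, hγnorm θ, hrdef, hA]
  have hrc : Continuous r := hAc.clm_apply (by exact hγcont.const_smul t⁻¹)
  set m : Eu l := amean u t with hmdef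
  set w : ℝ → Eu l := fun θ => g θ - m with hwdef
  have hwc : Continuous w := hgc.sub continuous_const
  -- the energy identity
  have hid : ∀ θ, t^2 * gradSq u (γ θ) = t^2 * ‖r θ‖^2 + ‖g' θ‖^2 := by
    intro θ
    set a := A θ (EuclideanSpace.single (0 : Fin 2) (1:ℝ)) with hadef
    set b := A θ (EuclideanSpace.single (1 : Fin 2) (1:ℝ)) with hbdef
    have hgr : gradSq u (γ θ) = ‖a‖^2 + ‖b‖^2 := by
      rw [gradSq, pd, pd, hadef, hbdef, hA]
    have hreq : r θ = Real.cos θ • a + Real.sin θ • b := by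
      show A θ (t⁻¹ • γ θ) = _
      have : γ θ = (t * Real.cos θ) • EuclideanSpace.single (0 : Fin 2) (1:ℝ)
          + (t * Real.sin θ) • EuclideanSpace.single (1 : Fin 2) (1:ℝ) := BTB.pt_decomp _ _
      rw [this, smul_add, smul_smul, smul_smul, map_add, _root_.map_smul, _root_.map_smul]
      rw [inv_mul_cancel_left₀ ht.ne' , inv_mul_cancel_left₀ ht.ne']
    have hg'eq : g' θ = (-(t * Real.sin θ)) • a + (t * Real.cos θ) • b := by
      show A θ (pt (-(t * Real.sin θ)) (t * Real.cos θ)) = _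
      rw [BTB.pt_decomp, map_add, _root_.map_smul, _root_.map_smul]
    rw [hgr, hreq, hg'eq, BTB.norm_smul_add_smul, BTB.norm_smul_add_smul]
    have hsc := Real.sin_sq_add_cos_sq θ
    linear_combination (-(t^2*(‖a‖^2 + ‖b‖^2))) * hsc
  -- Wirtinger
  have hγper : ∀ θ, γ (θ + 2*Real.pi) = γ θ := by
    intro θ; rw [hγdef]
    simp only [Real.cos_add_two_pi, Real.sin_add_two_pi]
  have hwper : Function.Periodic w (2*Real.pi) := by
    intro θ; rw [hwdef]; simp only [hgdef, hγper θ]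
  have hmean0 : ∫ θ in (0:ℝ)..(2*Real.pi), w θ = 0 := by
    rw [hwdef]
    rw [intervalIntegral.integral_sub (hgc.intervalIntegrable _ _) intervalIntegrable_const]
    rw [intervalIntegral.integral_const]
    have hm : m = (2*Real.pi)⁻¹ • ∫ θ in (0:ℝ)..(2*Real.pi), g θ := by
      rw [hmdef, amean]
    rw [hm, smul_smul, sub_zero]
    rw [mul_inv_cancel₀ hπ.ne', one_smul, sub_self]
  have hW : (∫ θ in (0:ℝ)..(2*Real.pi), ‖w θ‖^2) ≤ ∫ θ in (0:ℝ)..(2*Real.pi), ‖g' θ‖^2 :=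
    BTB.wirtinger_vec w g' hwper (fun θ => (hgd θ).sub_const m) hg'c hmean0
  -- rewrite the two circle integrals
  have hLHS : circInt t (fun x => ⟪radialDeriv u x, u x - amean u t⟫)
      = ∫ θ in (0:ℝ)..(2*Real.pi), ⟪r θ, w θ⟫ * t := by
    rw [circInt]
    apply intervalIntegral.integral_congr
    intro θ _
    show ⟪radialDeriv u (γ θ), u (γ θ) - amean u t⟫ * t = ⟪r θ, w θ⟫ * t
    rw [hradeq θ]
  have hRHS : (t / 2) * circInt t (fun x => gradSq u x)
      = ∫ θ in (0:ℝ)..(2*Real.pi), (t^2 * ‖r θ‖^2 + ‖g' θ‖^2)/2 := by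
    rw [circInt, ← intervalIntegral.integral_const_mul]
    apply intervalIntegral.integral_congr
    intro θ _
    show t / 2 * (gradSq u (γ θ) * t) = (t^2 * ‖r θ‖^2 + ‖g' θ‖^2)/2
    linear_combination (hid θ) / 2
  rw [hLHS, hRHS]
  have hint1 : IntervalIntegrable (fun θ => |⟪r θ, w θ⟫ * t|) MeasureTheory.volume 0 (2*Real.pi) :=
    (((hrc.inner hwc).mul continuous_const).abs).intervalIntegrable _ _
  have hint2 : IntervalIntegrable (fun θ => (t^2 * ‖r θ‖^2 + ‖w θ‖^2)/2)
      MeasureTheory.volume 0 (2*Real.pi) :=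
    (((continuous_const.mul ((hrc.norm).pow 2)).add ((hwc.norm).pow 2)).div_const 2).intervalIntegrable _ _
  have hint3 : IntervalIntegrable (fun θ => t^2 * ‖r θ‖^2) MeasureTheory.volume 0 (2*Real.pi) :=
    (continuous_const.mul ((hrc.norm).pow 2)).intervalIntegrable _ _
  have hint4 : IntervalIntegrable (fun θ => ‖w θ‖^2) MeasureTheory.volume 0 (2*Real.pi) :=
    ((hwc.norm).pow 2).intervalIntegrable _ _
  have hint5 : IntervalIntegrable (fun θ => ‖g' θ‖^2) MeasureTheory.volume 0 (2*Real.pi) :=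
    ((hg'c.norm).pow 2).intervalIntegrable _ _
  calc |∫ θ in (0:ℝ)..(2*Real.pi), ⟪r θ, w θ⟫ * t|
      ≤ ∫ θ in (0:ℝ)..(2*Real.pi), |⟪r θ, w θ⟫ * t| :=
        intervalIntegral.abs_integral_le_integral_abs hπ.le
    _ ≤ ∫ θ in (0:ℝ)..(2*Real.pi), (t^2 * ‖r θ‖^2 + ‖w θ‖^2)/2 := by
        apply intervalIntegral.integral_mono_on hπ.le hint1 hint2
        intro θ _
        have h1 : |⟪r θ, w θ⟫| ≤ ‖r θ‖ * ‖w θ‖ := abs_real_inner_le_norm _ _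
        rw [abs_mul, abs_of_pos ht]
        nlinarith [sq_nonneg (t * ‖r θ‖ - ‖w θ‖), norm_nonneg (r θ), norm_nonneg (w θ),
          mul_le_mul_of_nonneg_right h1 ht.le]
    _ ≤ ∫ θ in (0:ℝ)..(2*Real.pi), (t^2 * ‖r θ‖^2 + ‖g' θ‖^2)/2 := by
        have e1 : (∫ θ in (0:ℝ)..(2*Real.pi), (t^2 * ‖r θ‖^2 + ‖w θ‖^2)/2)
            = ((∫ θ in (0:ℝ)..(2*Real.pi), t^2 * ‖r θ‖^2)
              + ∫ θ in (0:ℝ)..(2*Real.pi), ‖w θ‖^2)/2 := by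
          rw [← intervalIntegral.integral_add hint3 hint4, ← intervalIntegral.integral_div]
        have e2 : (∫ θ in (0:ℝ)..(2*Real.pi), (t^2 * ‖r θ‖^2 + ‖g' θ‖^2)/2)
            = ((∫ θ in (0:ℝ)..(2*Real.pi), t^2 * ‖r θ‖^2)
              + ∫ θ in (0:ℝ)..(2*Real.pi), ‖g' θ‖^2)/2 := by
          rw [← intervalIntegral.integral_add hint3 hint5, ← intervalIntegral.integral_div]
        rw [e1, e2]
        linarith [hW]

end
end

section
/- Let 0 < a ≤ b, K ≥ 0, and let u : Ω → ℝ^l be a C¹ map on an open neighbourhood Ω of the closed annulus {a ≤ |x| ≤ b} in ℝ², satisfying |∇u(x)| ≤ K/|x| for all a ≤ |x| ≤ b. Then for all x, y with a ≤ |x| ≤ b and a ≤ |y| ≤ b one has |u(x) − u(y)| ≤ K (log(b/a) + π). In particular the oscillation of u over the annulus is at most K(log(b/a) + π). -/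
open scoped RealInnerProductSpace
open Filter MeasureTheory Metric

noncomputable section

/-!
The exponential map carries the strip `log a ≤ Re z ≤ log b`, which is convex, onto the annulus,
and turns the scale-invariant bound `|w| |∇u(w)| ≤ K` into `|∇(u ∘ exp)| ≤ K`. So `u ∘ exp` is
`K`-Lipschitz on the strip, and two points `c, d` of the annulus have the preimages `log c` and
`log c + log (d / c)`, at distance `|log (d / c)| ≤ |log |d| - log |c|| + |arg (d / c)|
≤ log (b / a) + π`.
-/

open Complex Set

theorem convex_exp_preimage_norm_mem {s : Set ℝ} (hs : s.OrdConnected) :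
    Convex ℝ (exp ⁻¹' {w : ℂ | ‖w‖ ∈ s}) := by
  have : exp ⁻¹' {w : ℂ | ‖w‖ ∈ s} = reLm ⁻¹' (Real.exp ⁻¹' s) := by
    ext z; simp [norm_exp]
  rw [this]
  exact (hs.preimage_mono Real.exp_monotone).convex.linear_preimage reLm

theorem ContinuousLinearMap.opNorm_le_sqrt_sum_norm_apply_single_sq {ι F : Type*} [Fintype ι]
    [DecidableEq ι] [NormedAddCommGroup F] [NormedSpace ℝ F] (f : EuclideanSpace ℝ ι →L[ℝ] F) :
    ‖f‖ ≤ √(∑ i, ‖f (EuclideanSpace.single i 1)‖ ^ 2) := by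
  refine f.opNorm_le_bound (Real.sqrt_nonneg _) fun v => ?_
  calc ‖f v‖ = ‖∑ i, v i • f (EuclideanSpace.single i 1)‖ := by
        conv_lhs => rw [← (EuclideanSpace.basisFun ι ℝ).sum_repr v]
        simp
    _ ≤ ∑ i, |v i| * ‖f (EuclideanSpace.single i 1)‖ :=
        (norm_sum_le _ _).trans_eq (by simp [norm_smul])
    _ ≤ √(∑ i, |v i| ^ 2) * √(∑ i, ‖f (EuclideanSpace.single i 1)‖ ^ 2) :=
        Real.sum_mul_le_sqrt_mul_sqrt _ _ _
    _ = _ := by rw [EuclideanSpace.norm_eq, mul_comm]; simp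

theorem norm_fderiv_le_sqrt_gradSq {l : ℕ} (u : E2 → Eu l) (x : E2) :
    ‖fderiv ℝ u x‖ ≤ √(gradSq u x) := by
  simpa [gradSq, pd, Fin.sum_univ_two] using
    (fderiv ℝ u x).opNorm_le_sqrt_sum_norm_apply_single_sq

theorem norm_log_div_le {a b : ℝ} (ha : 0 < a) {c d : ℂ} (hc : ‖c‖ ∈ Icc a b)
    (hd : ‖d‖ ∈ Icc a b) : ‖log (d / c)‖ ≤ Real.log (b / a) + Real.pi := by
  have hc₀ : ‖c‖ ≠ 0 := (ha.trans_le hc.1).ne'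
  have hd₀ : ‖d‖ ≠ 0 := (ha.trans_le hd.1).ne'
  have hre : |Real.log ‖d‖ - Real.log ‖c‖| ≤ Real.log b - Real.log a := by
    have := Real.log_le_log ha hc.1
    have := Real.log_le_log ha hd.1
    have := Real.log_le_log (ha.trans_le hc.1) hc.2
    have := Real.log_le_log (ha.trans_le hd.1) hd.2
    rw [abs_sub_le_iff]; constructor <;> linarith
  calc ‖log (d / c)‖ ≤ |(log (d / c)).re| + |(log (d / c)).im| := norm_le_abs_re_add_abs_im _
    _ ≤ Real.log (b / a) + Real.pi := by
      gcongr ?_ + ?_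
      · rwa [log_re, norm_div, Real.log_div hd₀ hc₀,
          Real.log_div (ha.trans_le (hc.1.trans hc.2)).ne' ha.ne']
      · rw [log_im]; exact abs_arg_le_pi _

theorem norm_sub_le_mul_norm_log_div {F : Type*} [NormedAddCommGroup F] [NormedSpace ℝ F]
    {v : ℂ → F} {s : Set ℝ} {K : ℝ} (hs : s.OrdConnected) (hs₀ : 0 ∉ s)
    (hdiff : ∀ w : ℂ, ‖w‖ ∈ s → DifferentiableAt ℝ v w)
    (hbound : ∀ w : ℂ, ‖w‖ ∈ s → ‖fderiv ℝ v w‖ * ‖w‖ ≤ K)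
    {c d : ℂ} (hc : ‖c‖ ∈ s) (hd : ‖d‖ ∈ s) :
    ‖v d - v c‖ ≤ K * ‖log (d / c)‖ := by
  have hc₀ : c ≠ 0 := fun h => hs₀ (by simpa [h] using hc)
  have hd₀ : d ≠ 0 := fun h => hs₀ (by simpa [h] using hd)
  have hderiv (z : ℂ) (hz : ‖exp z‖ ∈ s) : HasFDerivAt (v ∘ exp)
      ((fderiv ℝ v (exp z)).comp
        ((ContinuousLinearMap.smulRight 1 (exp z)).restrictScalars ℝ)) z :=
    (hdiff _ hz).hasFDerivAt.comp z ((hasDerivAt_exp z).hasFDerivAt.restrictScalars ℝ)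
  have hnorm (z : ℂ) (hz : ‖exp z‖ ∈ s) : ‖(fderiv ℝ v (exp z)).comp
      ((ContinuousLinearMap.smulRight (1 : ℂ →L[ℂ] ℂ) (exp z)).restrictScalars ℝ)‖ ≤ K := by
    refine (ContinuousLinearMap.opNorm_comp_le _ _).trans (le_trans ?_ (hbound _ hz))
    rw [ContinuousLinearMap.norm_restrictScalars, ContinuousLinearMap.norm_smulRight_apply]
    gcongr
    exact mul_le_of_le_one_left (norm_nonneg _) ContinuousLinearMap.norm_id_le
  have hexp : exp (log c + log (d / c)) = d := by
    rw [exp_add, exp_log hc₀, exp_log (div_ne_zero hd₀ hc₀), mul_div_cancel₀ _ hc₀]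
  have := (convex_exp_preimage_norm_mem hs).norm_image_sub_le_of_norm_hasFDerivWithin_le
    (fun z hz => (hderiv z hz).hasFDerivWithinAt) hnorm (x := log c) (y := log c + log (d / c))
    (show ‖exp (log c)‖ ∈ s by rwa [exp_log hc₀]) (show ‖exp _‖ ∈ s by rwa [hexp])
  simpa [hexp, exp_log hc₀] using this

theorem annulus_oscillation_bound_general {l : ℕ} (a b K : ℝ) (ha : 0 < a) (hK : 0 ≤ K)
    (Ω : Set E2) (hΩ : IsOpen Ω) (hann : {x : E2 | a ≤ ‖x‖ ∧ ‖x‖ ≤ b} ⊆ Ω)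
    (u : E2 → Eu l) (hu : ContDiffOn ℝ 1 u Ω)
    (hgrad : ∀ x : E2, a ≤ ‖x‖ → ‖x‖ ≤ b → Real.sqrt (gradSq u x) ≤ K / ‖x‖) :
    ∀ x y : E2, a ≤ ‖x‖ → ‖x‖ ≤ b → a ≤ ‖y‖ → ‖y‖ ≤ b →
      ‖u x - u y‖ ≤ K * (Real.log (b / a) + Real.pi) := by
  intro x y hax hxb hay hyb
  set e := Complex.orthonormalBasisOneI.repr
  have hdiff (w : ℂ) (hw : ‖w‖ ∈ Icc a b) : DifferentiableAt ℝ (u ∘ e) w :=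
    ((hu.contDiffAt (hΩ.mem_nhds (hann (by simpa using hw)))).differentiableAt
      one_ne_zero).comp w e.differentiableAt
  have hbound (w : ℂ) (hw : ‖w‖ ∈ Icc a b) : ‖fderiv ℝ (u ∘ e) w‖ * ‖w‖ ≤ K := by
    have he : ‖e w‖ ∈ Icc a b := by simpa using hw
    have hcomp : fderiv ℝ (u ∘ e) w = (fderiv ℝ u (e w)).comp (e : ℂ →L[ℝ] E2) :=
      e.toContinuousLinearEquiv.comp_right_fderiv
    rw [hcomp, ContinuousLinearMap.opNorm_comp_linearIsometryEquiv, ← e.norm_map w,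
      ← le_div_iff₀ (ha.trans_le he.1)]
    exact (norm_fderiv_le_sqrt_gradSq u _).trans (hgrad _ he.1 he.2)
  have hx : ‖e.symm x‖ ∈ Icc a b := by simpa using ⟨hax, hxb⟩
  have hy : ‖e.symm y‖ ∈ Icc a b := by simpa using ⟨hay, hyb⟩
  have hlip := norm_sub_le_mul_norm_log_div ordConnected_Icc (fun h => ha.not_ge h.1)
    hdiff hbound hy hx
  simp only [Function.comp_apply, LinearIsometryEquiv.apply_symm_apply] at hlip
  exact hlip.trans (mul_le_mul_of_nonneg_left (norm_log_div_le ha hy hx) hK)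

/-- if `u` is `C¹` on a neighbourhood of the closed annulus `{a ≤ |x| ≤ b}`
(`0 < a ≤ b`) with `|∇u(x)| ≤ K/|x|` there, then for all `x, y` in the annulus
`|u(x) − u(y)| ≤ K(log(b/a) + π)`; in particular the oscillation of `u` over the annulus is
at most `K(log(b/a) + π)`. -/
theorem annulus_oscillation_bound {l : ℕ} (a b K : ℝ) (ha : 0 < a) (hab : a ≤ b) (hK : 0 ≤ K)
    (Ω : Set E2) (hΩ : IsOpen Ω) (hann : {x : E2 | a ≤ ‖x‖ ∧ ‖x‖ ≤ b} ⊆ Ω)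
    (u : E2 → Eu l) (hu : ContDiffOn ℝ 1 u Ω)
    (hgrad : ∀ x : E2, a ≤ ‖x‖ → ‖x‖ ≤ b → Real.sqrt (gradSq u x) ≤ K / ‖x‖) :
    ∀ x y : E2, a ≤ ‖x‖ → ‖x‖ ≤ b → a ≤ ‖y‖ → ‖y‖ ≤ b →
      ‖u x - u y‖ ≤ K * (Real.log (b / a) + Real.pi) :=
  annulus_oscillation_bound_general a b K ha hK Ω hΩ hann u hu hgrad

end
end
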